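/- Let A and X be double categories each equipped with a folding, and let F : X → A and G : A → X be double functors compatible with the foldings. Then F and G are horizontal double adjoints if and only if their horizontal 2-functors HF and HG are 2-adjoints. -/

import Mathlib

set_option linter.unusedVariables false

/-! Core definitions: strict 2-categories and strict double categories. -/

universe u v w x u' v' w' x' u'' v'' w'' x''

/-- A (strict) 2-category, given by explicit data.  The 1-dimensional category
laws are included as propositional fields; the 2-dimensional laws are collected
in `TwoCat.Laws`. -/
structure TwoCat where
  Obj : Type u
  Hom : Obj → Obj → Type v
  Cell : ∀ {a b : Obj}, Hom a b → Hom a b → Type w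
  hid : ∀ a, Hom a a
  hcomp : ∀ {a b c}, Hom a b → Hom b c → Hom a c
  hid_comp : ∀ {a b} (f : Hom a b), hcomp (hid a) f = f
  hcomp_id : ∀ {a b} (f : Hom a b), hcomp f (hid b) = f
  hassoc : ∀ {a b c d} (f : Hom a b) (g : Hom b c) (h : Hom c d),
    hcomp (hcomp f g) h = hcomp f (hcomp g h)
  cid : ∀ {a b} (f : Hom a b), Cell f f
  vcomp : ∀ {a b} {f g h : Hom a b}, Cell f g → Cell g h → Cell f h
  hcomp₂ : ∀ {a b c} {f f' : Hom a b} {g g' : Hom b c},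
    Cell f f' → Cell g g' → Cell (hcomp f g) (hcomp f' g')

namespace TwoCat

/-- Transport a 2-cell along equalities of its boundary 1-cells. -/
def recast (K : TwoCat) {a b : K.Obj} {f f' g g' : K.Hom a b}
    (hf : f = f') (hg : g = g') (α : K.Cell f g) : K.Cell f' g' := by
  cases hf; cases hg; exact α

/-- The 2-dimensional laws of a strict 2-category. -/
structure Laws (K : TwoCat) : Prop where
  vcomp_cid : ∀ {a b} {f g : K.Hom a b} (α : K.Cell f g), K.vcomp α (K.cid g) = α
  cid_vcomp : ∀ {a b} {f g : K.Hom a b} (α : K.Cell f g), K.vcomp (K.cid f) α = α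
  vcomp_assoc : ∀ {a b} {f g h i : K.Hom a b} (α : K.Cell f g) (β : K.Cell g h)
    (γ : K.Cell h i), K.vcomp (K.vcomp α β) γ = K.vcomp α (K.vcomp β γ)
  hcomp₂_cid : ∀ {a b c} (f : K.Hom a b) (g : K.Hom b c),
    K.hcomp₂ (K.cid f) (K.cid g) = K.cid (K.hcomp f g)
  interchange : ∀ {a b c} {f f' f'' : K.Hom a b} {g g' g'' : K.Hom b c}
    (α : K.Cell f f') (α' : K.Cell f' f'') (β : K.Cell g g') (β' : K.Cell g' g''),
    K.hcomp₂ (K.vcomp α α') (K.vcomp β β') = K.vcomp (K.hcomp₂ α β) (K.hcomp₂ α' β')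
  hcomp₂_assoc : ∀ {a b c d} {f f' : K.Hom a b} {g g' : K.Hom b c} {h h' : K.Hom c d}
    (α : K.Cell f f') (β : K.Cell g g') (γ : K.Cell h h'),
    HEq (K.hcomp₂ (K.hcomp₂ α β) γ) (K.hcomp₂ α (K.hcomp₂ β γ))
  id_hcomp₂ : ∀ {a b} {f f' : K.Hom a b} (α : K.Cell f f'),
    HEq (K.hcomp₂ (K.cid (K.hid a)) α) α
  hcomp₂_id : ∀ {a b} {f f' : K.Hom a b} (α : K.Cell f f'),
    HEq (K.hcomp₂ α (K.cid (K.hid b))) α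

/-- The same 2-category with 2-cells reversed. -/
def co (K : TwoCat) : TwoCat where
  Obj := K.Obj
  Hom := K.Hom
  Cell f g := K.Cell g f
  hid := K.hid
  hcomp := K.hcomp
  hid_comp := K.hid_comp
  hcomp_id := K.hcomp_id
  hassoc := K.hassoc
  cid := K.cid
  vcomp α β := K.vcomp β α
  hcomp₂ α β := K.hcomp₂ α β

end TwoCat

/-- A (strict) double category, given by explicit data.  The 1-dimensional
category laws for horizontal and vertical morphisms are included; the
square-level laws are collected in `DoubleCat.Laws`. -/
structure DoubleCat where
  Obj : Type u
  Hor : Obj → Obj → Type v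
  Ver : Obj → Obj → Type w
  Sq : ∀ {a b c d : Obj}, Hor a b → Ver a c → Ver b d → Hor c d → Type x
  hId : ∀ a, Hor a a
  hComp : ∀ {a b c}, Hor a b → Hor b c → Hor a c
  vId : ∀ a, Ver a a
  vComp : ∀ {a b c}, Ver a b → Ver b c → Ver a c
  hId_comp : ∀ {a b} (f : Hor a b), hComp (hId a) f = f
  hComp_id : ∀ {a b} (f : Hor a b), hComp f (hId b) = f
  hAssoc : ∀ {a b c d} (f : Hor a b) (g : Hor b c) (h : Hor c d),
    hComp (hComp f g) h = hComp f (hComp g h)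
  vId_comp : ∀ {a b} (j : Ver a b), vComp (vId a) j = j
  vComp_id : ∀ {a b} (j : Ver a b), vComp j (vId b) = j
  vAssoc : ∀ {a b c d} (j : Ver a b) (k : Ver b c) (l : Ver c d),
    vComp (vComp j k) l = vComp j (vComp k l)
  idSqV : ∀ {a b} (f : Hor a b), Sq f (vId a) (vId b) f
  idSqH : ∀ {a b} (j : Ver a b), Sq (hId a) j j (hId b)
  hCompSq : ∀ {a b c a' b' c'} {f : Hor a b} {g : Hor b c} {j : Ver a a'}
    {k : Ver b b'} {l : Ver c c'} {f' : Hor a' b'} {g' : Hor b' c'},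
    Sq f j k f' → Sq g k l g' → Sq (hComp f g) j l (hComp f' g')
  vCompSq : ∀ {a b c d e e'} {f : Hor a b} {j : Ver a c} {k : Ver b d}
    {g : Hor c d} {j' : Ver c e} {k' : Ver d e'} {h : Hor e e'},
    Sq f j k g → Sq g j' k' h → Sq f (vComp j j') (vComp k k') h

namespace DoubleCat

/-- Transport a square along equalities of its four boundaries. -/
def recast (D : DoubleCat) {a b c d : D.Obj} {f f' : D.Hor a b} {j j' : D.Ver a c}
    {k k' : D.Ver b d} {g g' : D.Hor c d} (hf : f = f') (hj : j = j') (hk : k = k')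
    (hg : g = g') (α : D.Sq f j k g) : D.Sq f' j' k' g' := by
  cases hf; cases hj; cases hk; cases hg; exact α

/-- The square-level laws of a strict double category. -/
structure Laws (D : DoubleCat) : Prop where
  hCompSq_assoc : ∀ {a₁ a₂ a₃ a₄ b₁ b₂ b₃ b₄} {f₁ : D.Hor a₁ a₂} {f₂ : D.Hor a₂ a₃}
    {f₃ : D.Hor a₃ a₄} {j₁ : D.Ver a₁ b₁} {j₂ : D.Ver a₂ b₂} {j₃ : D.Ver a₃ b₃}
    {j₄ : D.Ver a₄ b₄} {g₁ : D.Hor b₁ b₂} {g₂ : D.Hor b₂ b₃} {g₃ : D.Hor b₃ b₄}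
    (α : D.Sq f₁ j₁ j₂ g₁) (β : D.Sq f₂ j₂ j₃ g₂) (γ : D.Sq f₃ j₃ j₄ g₃),
    HEq (D.hCompSq (D.hCompSq α β) γ) (D.hCompSq α (D.hCompSq β γ))
  idSqH_hComp : ∀ {a b c d} {f : D.Hor a b} {j : D.Ver a c} {k : D.Ver b d}
    {g : D.Hor c d} (α : D.Sq f j k g), HEq (D.hCompSq (D.idSqH j) α) α
  hComp_idSqH : ∀ {a b c d} {f : D.Hor a b} {j : D.Ver a c} {k : D.Ver b d}
    {g : D.Hor c d} (α : D.Sq f j k g), HEq (D.hCompSq α (D.idSqH k)) α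
  vCompSq_assoc : ∀ {a₁ b₁ a₂ b₂ a₃ b₃ a₄ b₄} {f₁ : D.Hor a₁ b₁} {f₂ : D.Hor a₂ b₂}
    {f₃ : D.Hor a₃ b₃} {f₄ : D.Hor a₄ b₄} {j₁ : D.Ver a₁ a₂} {j₂ : D.Ver a₂ a₃}
    {j₃ : D.Ver a₃ a₄} {k₁ : D.Ver b₁ b₂} {k₂ : D.Ver b₂ b₃} {k₃ : D.Ver b₃ b₄}
    (α : D.Sq f₁ j₁ k₁ f₂) (β : D.Sq f₂ j₂ k₂ f₃) (γ : D.Sq f₃ j₃ k₃ f₄),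
    HEq (D.vCompSq (D.vCompSq α β) γ) (D.vCompSq α (D.vCompSq β γ))
  idSqV_vComp : ∀ {a b c d} {f : D.Hor a b} {j : D.Ver a c} {k : D.Ver b d}
    {g : D.Hor c d} (α : D.Sq f j k g), HEq (D.vCompSq (D.idSqV f) α) α
  vComp_idSqV : ∀ {a b c d} {f : D.Hor a b} {j : D.Ver a c} {k : D.Ver b d}
    {g : D.Hor c d} (α : D.Sq f j k g), HEq (D.vCompSq α (D.idSqV g)) α
  interchange : ∀ {a₁ a₂ a₃ b₁ b₂ b₃ c₁ c₂ c₃} {f₁ : D.Hor a₁ a₂} {f₂ : D.Hor a₂ a₃}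
    {g₁ : D.Hor b₁ b₂} {g₂ : D.Hor b₂ b₃} {h₁ : D.Hor c₁ c₂} {h₂ : D.Hor c₂ c₃}
    {j₁ : D.Ver a₁ b₁} {j₂ : D.Ver a₂ b₂} {j₃ : D.Ver a₃ b₃}
    {k₁ : D.Ver b₁ c₁} {k₂ : D.Ver b₂ c₂} {k₃ : D.Ver b₃ c₃}
    (α : D.Sq f₁ j₁ j₂ g₁) (β : D.Sq f₂ j₂ j₃ g₂)
    (α' : D.Sq g₁ k₁ k₂ h₁) (β' : D.Sq g₂ k₂ k₃ h₂),
    D.hCompSq (D.vCompSq α α') (D.vCompSq β β')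
      = D.vCompSq (D.hCompSq α β) (D.hCompSq α' β')
  idSqH_vComp : ∀ {a b c} (j : D.Ver a b) (j' : D.Ver b c),
    D.vCompSq (D.idSqH j) (D.idSqH j') = D.idSqH (D.vComp j j')
  idSqV_hComp : ∀ {a b c} (f : D.Hor a b) (g : D.Hor b c),
    D.hCompSq (D.idSqV f) (D.idSqV g) = D.idSqV (D.hComp f g)

/-- The horizontal 2-category of a double category. -/
def H (D : DoubleCat) : TwoCat where
  Obj := D.Obj
  Hom := D.Hor
  Cell f g := D.Sq f (D.vId _) (D.vId _) g
  hid := D.hId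
  hcomp := D.hComp
  hid_comp := D.hId_comp
  hcomp_id := D.hComp_id
  hassoc := D.hAssoc
  cid := D.idSqV
  vcomp α β := D.recast rfl (D.vId_comp _) (D.vId_comp _) rfl (D.vCompSq α β)
  hcomp₂ := D.hCompSq

/-- The vertical 2-category of a double category. -/
def V (D : DoubleCat) : TwoCat where
  Obj := D.Obj
  Hom := D.Ver
  Cell j k := D.Sq (D.hId _) j k (D.hId _)
  hid := D.vId
  hcomp := D.vComp
  hid_comp := D.vId_comp
  hcomp_id := D.vComp_id
  hassoc := D.vAssoc
  cid := D.idSqH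
  vcomp α β := D.recast (D.hId_comp _) rfl rfl (D.hId_comp _) (D.hCompSq α β)
  hcomp₂ := D.vCompSq

end DoubleCat
namespace TwoCat

/-- The double category of direct quintets of a 2-category. -/
def Quintet (K : TwoCat) : DoubleCat where
  Obj := K.Obj
  Hor := K.Hom
  Ver := K.Hom
  Sq f j k g := K.Cell (K.hcomp f k) (K.hcomp j g)
  hId := K.hid
  hComp := K.hcomp
  vId := K.hid
  vComp := K.hcomp
  hId_comp := K.hid_comp
  hComp_id := K.hcomp_id
  hAssoc := K.hassoc
  vId_comp := K.hid_comp
  vComp_id := K.hcomp_id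
  vAssoc := K.hassoc
  idSqV f := K.recast (K.hcomp_id f).symm (K.hid_comp f).symm (K.cid f)
  idSqH j := K.recast (K.hid_comp j).symm (K.hcomp_id j).symm (K.cid j)
  hCompSq {a b c a' b' c'} {f g j k l f' g'} α β :=
    K.recast (K.hassoc f g l).symm (K.hassoc j f' g')
      (K.vcomp (K.hcomp₂ (K.cid f) β)
        (K.recast (K.hassoc f k g') rfl (K.hcomp₂ α (K.cid g'))))
  vCompSq {a b c d e e'} {f j k g j' k' h} α β :=
    K.recast rfl (K.hassoc j j' h).symm
      (K.vcomp (K.recast (K.hassoc f k k') (K.hassoc j g k') (K.hcomp₂ α (K.cid k')))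
        (K.hcomp₂ (K.cid j) β))

/-- The double category of inverse quintets of a 2-category. -/
def InvQuintet (K : TwoCat) : DoubleCat where
  Obj := K.Obj
  Hor := K.Hom
  Ver a b := K.Hom b a
  Sq {a b c d} f j k g := K.Cell (K.hcomp j f) (K.hcomp g k)
  hId := K.hid
  hComp := K.hcomp
  vId := K.hid
  vComp j k := K.hcomp k j
  hId_comp := K.hid_comp
  hComp_id := K.hcomp_id
  hAssoc := K.hassoc
  vId_comp j := K.hcomp_id j
  vComp_id j := K.hid_comp j
  vAssoc j k l := (K.hassoc l k j).symm
  idSqV f := K.recast (K.hid_comp f).symm (K.hcomp_id f).symm (K.cid f)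
  idSqH j := K.recast (K.hcomp_id j).symm (K.hid_comp j).symm (K.cid j)
  hCompSq {a b c a' b' c'} {f g j k l f' g'} α β :=
    K.recast rfl (K.hassoc f' g' l).symm
      (K.vcomp (K.recast (K.hassoc j f g) (K.hassoc f' k g) (K.hcomp₂ α (K.cid g)))
        (K.hcomp₂ (K.cid f') β))
  vCompSq {a b c d e e'} {f j k g j' k' h} α β :=
    K.recast (K.hassoc j' j f).symm (K.hassoc h k' k)
      (K.vcomp (K.hcomp₂ (K.cid j') α)
        (K.recast (K.hassoc j' g k) rfl (K.hcomp₂ β (K.cid k))))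

end TwoCat

/-- A (strict) double functor: the data.  The strict preservation laws are
collected in `DoubleFunctor.Laws`. -/
structure DoubleFunctor (C : DoubleCat) (D : DoubleCat) where
  obj : C.Obj → D.Obj
  hmap : ∀ {a b}, C.Hor a b → D.Hor (obj a) (obj b)
  vmap : ∀ {a b}, C.Ver a b → D.Ver (obj a) (obj b)
  smap : ∀ {a b c d} {f : C.Hor a b} {j : C.Ver a c} {k : C.Ver b d}
    {g : C.Hor c d}, C.Sq f j k g → D.Sq (hmap f) (vmap j) (vmap k) (hmap g)

namespace DoubleFunctor

variable {C D E : DoubleCat}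

/-- A double functor strictly preserves identities and compositions. -/
structure Laws (F : DoubleFunctor C D) : Prop where
  hmap_id : ∀ a, F.hmap (C.hId a) = D.hId (F.obj a)
  hmap_comp : ∀ {a b c} (f : C.Hor a b) (g : C.Hor b c),
    F.hmap (C.hComp f g) = D.hComp (F.hmap f) (F.hmap g)
  vmap_id : ∀ a, F.vmap (C.vId a) = D.vId (F.obj a)
  vmap_comp : ∀ {a b c} (j : C.Ver a b) (k : C.Ver b c),
    F.vmap (C.vComp j k) = D.vComp (F.vmap j) (F.vmap k)
  smap_idSqV : ∀ {a b} (f : C.Hor a b), HEq (F.smap (C.idSqV f)) (D.idSqV (F.hmap f))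
  smap_idSqH : ∀ {a b} (j : C.Ver a b), HEq (F.smap (C.idSqH j)) (D.idSqH (F.vmap j))
  smap_hComp : ∀ {a b c a' b' c'} {f : C.Hor a b} {g : C.Hor b c} {j : C.Ver a a'}
    {k : C.Ver b b'} {l : C.Ver c c'} {f' : C.Hor a' b'} {g' : C.Hor b' c'}
    (α : C.Sq f j k f') (β : C.Sq g k l g'),
    HEq (F.smap (C.hCompSq α β)) (D.hCompSq (F.smap α) (F.smap β))
  smap_vComp : ∀ {a b c d e e'} {f : C.Hor a b} {j : C.Ver a c} {k : C.Ver b d}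
    {g : C.Hor c d} {j' : C.Ver c e} {k' : C.Ver d e'} {h : C.Hor e e'}
    (α : C.Sq f j k g) (β : C.Sq g j' k' h),
    HEq (F.smap (C.vCompSq α β)) (D.vCompSq (F.smap α) (F.smap β))

/-- The identity double functor. -/
def idF (C : DoubleCat) : DoubleFunctor C C where
  obj a := a
  hmap f := f
  vmap j := j
  smap s := s

/-- Composition of double functors (diagrammatic order). -/
def comp (F : DoubleFunctor C D) (G : DoubleFunctor D E) : DoubleFunctor C E where
  obj a := G.obj (F.obj a)
  hmap f := G.hmap (F.hmap f)
  vmap j := G.vmap (F.vmap j)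
  smap s := G.smap (F.smap s)

end DoubleFunctor

/-- A horizontal natural transformation between double functors (data). -/
structure HorNatTrans {C D : DoubleCat} (F G : DoubleFunctor C D) where
  app : ∀ a, D.Hor (F.obj a) (G.obj a)
  sq : ∀ {a b} (j : C.Ver a b), D.Sq (app a) (F.vmap j) (G.vmap j) (app b)

namespace HorNatTrans

variable {C D : DoubleCat} {F G : DoubleFunctor C D}

structure Laws (θ : HorNatTrans F G) : Prop where
  sq_id : ∀ a, HEq (θ.sq (C.vId a)) (D.idSqV (θ.app a))
  sq_comp : ∀ {a b c} (j : C.Ver a b) (j' : C.Ver b c),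
    HEq (θ.sq (C.vComp j j')) (D.vCompSq (θ.sq j) (θ.sq j'))
  natural_hor : ∀ {a b} (f : C.Hor a b),
    D.hComp (F.hmap f) (θ.app b) = D.hComp (θ.app a) (G.hmap f)
  natural : ∀ {a b c d} {f : C.Hor a b} {j : C.Ver a c} {k : C.Ver b d}
    {g : C.Hor c d} (α : C.Sq f j k g),
    HEq (D.hCompSq (F.smap α) (θ.sq k)) (D.hCompSq (θ.sq j) (G.smap α))

end HorNatTrans

/-- A vertical natural transformation between double functors (data plus laws). -/
structure VertNatTrans {C D : DoubleCat} (F G : DoubleFunctor C D) where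
  app : ∀ a, D.Ver (F.obj a) (G.obj a)
  sq : ∀ {a b} (f : C.Hor a b), D.Sq (F.hmap f) (app a) (app b) (G.hmap f)

namespace VertNatTrans

variable {C D : DoubleCat} {F G : DoubleFunctor C D}

structure Laws (θ : VertNatTrans F G) : Prop where
  sq_id : ∀ a, HEq (θ.sq (C.hId a)) (D.idSqH (θ.app a))
  sq_comp : ∀ {a b c} (f : C.Hor a b) (g : C.Hor b c),
    HEq (θ.sq (C.hComp f g)) (D.hCompSq (θ.sq f) (θ.sq g))
  natural_ver : ∀ {a b} (j : C.Ver a b),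
    D.vComp (F.vmap j) (θ.app b) = D.vComp (θ.app a) (G.vmap j)
  natural : ∀ {a b c d} {f : C.Hor a b} {j : C.Ver a c} {k : C.Ver b d}
    {g : C.Hor c d} (α : C.Sq f j k g),
    HEq (D.vCompSq (F.smap α) (θ.sq g)) (D.vCompSq (θ.sq f) (G.smap α))

end VertNatTrans

/-- A horizontal double adjunction `F ⊣ G` : an internal adjunction in the
2-category of double categories, double functors and horizontal natural
transformations, presented by unit and counit and triangle identities. -/
structure HorDoubleAdj {X A : DoubleCat} (F : DoubleFunctor X A) (G : DoubleFunctor A X) where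
  F_laws : F.Laws
  G_laws : G.Laws
  unit : HorNatTrans (DoubleFunctor.idF X) (F.comp G)
  counit : HorNatTrans (G.comp F) (DoubleFunctor.idF A)
  unit_laws : unit.Laws
  counit_laws : counit.Laws
  triangleF_obj : ∀ a, A.hComp (F.hmap (unit.app a)) (counit.app (F.obj a)) = A.hId (F.obj a)
  triangleF_sq : ∀ {a b} (j : X.Ver a b),
    HEq (A.hCompSq (F.smap (unit.sq j)) (counit.sq (F.vmap j))) (A.idSqH (F.vmap j))
  triangleG_obj : ∀ a, X.hComp (unit.app (G.obj a)) (G.hmap (counit.app a)) = X.hId (G.obj a)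
  triangleG_sq : ∀ {a b} (k : A.Ver a b),
    HEq (X.hCompSq (unit.sq (G.vmap k)) (G.smap (counit.sq k))) (X.idSqH (G.vmap k))

/-- A vertical double adjunction `F ⊣ G` (F vertical left double adjoint). -/
structure VertDoubleAdj {X A : DoubleCat} (F : DoubleFunctor X A) (G : DoubleFunctor A X) where
  F_laws : F.Laws
  G_laws : G.Laws
  unit : VertNatTrans (DoubleFunctor.idF X) (F.comp G)
  counit : VertNatTrans (G.comp F) (DoubleFunctor.idF A)
  unit_laws : unit.Laws
  counit_laws : counit.Laws
  triangleF_obj : ∀ a, A.vComp (F.vmap (unit.app a)) (counit.app (F.obj a)) = A.vId (F.obj a)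
  triangleF_sq : ∀ {a b} (f : X.Hor a b),
    HEq (A.vCompSq (F.smap (unit.sq f)) (counit.sq (F.hmap f))) (A.idSqV (F.hmap f))
  triangleG_obj : ∀ a, X.vComp (unit.app (G.obj a)) (G.vmap (counit.app a)) = X.vId (G.obj a)
  triangleG_sq : ∀ {a b} (g : A.Hor a b),
    HEq (X.vCompSq (unit.sq (G.hmap g)) (G.smap (counit.sq g))) (X.idSqV (G.hmap g))

namespace DoubleCat

variable {D : DoubleCat}

/-- The set of squares with fixed left vertical boundary `j` and fixed right
vertical boundary `k` (with varying top and bottom). -/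
def SqSet (D : DoubleCat) {a b c d : D.Obj} (j : D.Ver a c) (k : D.Ver b d) :
    Type _ :=
  Σ (f : D.Hor a b) (g : D.Hor c d), D.Sq f j k g

/-- Horizontal composition of elements of `SqSet`. -/
def SqSet.hcomp {a b c a' b' c' : D.Obj} {j : D.Ver a a'} {k : D.Ver b b'}
    {l : D.Ver c c'} (x : D.SqSet j k) (y : D.SqSet k l) : D.SqSet j l :=
  ⟨D.hComp x.1 y.1, D.hComp x.2.1 y.2.1, D.hCompSq x.2.2 y.2.2⟩

/-- Vertical composition of elements of `SqSet` (given that the bottom of the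
first is the top of the second). -/
def SqSet.vcomp {a b c d e e' : D.Obj} {j : D.Ver a c} {k : D.Ver b d}
    {j' : D.Ver c e} {k' : D.Ver d e'} (x : D.SqSet j k) (y : D.SqSet j' k')
    (h : x.2.1 = y.1) : D.SqSet (D.vComp j j') (D.vComp k k') :=
  ⟨x.1, y.2.1, D.vCompSq x.2.2 (D.recast h.symm rfl rfl rfl y.2.2)⟩

end DoubleCat

namespace DoubleFunctor

variable {C D : DoubleCat}

/-- The image of a `SqSet` element under a double functor. -/
def mapSqSet (F : DoubleFunctor C D) {a b c d : C.Obj} {j : C.Ver a c}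
    {k : C.Ver b d} (x : C.SqSet j k) : D.SqSet (F.vmap j) (F.vmap k) :=
  ⟨F.hmap x.1, F.hmap x.2.1, F.smap x.2.2⟩

/-- Post-composition with a square `μ` from a vertical morphism `j` to `S`. -/
def inducedMap (S : DoubleFunctor D C) {a a' : C.Obj} {r r' : D.Obj}
    {j : C.Ver a a'} {k : D.Ver r r'} (μ : C.SqSet j (S.vmap k))
    {d d' : D.Obj} (l : D.Ver d d') (x : D.SqSet k l) : C.SqSet j (S.vmap l) :=
  DoubleCat.SqSet.hcomp μ (S.mapSqSet x)

/-- `μ` is a (horizontally) universal square from the vertical morphism `j`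
to the double functor `S`. -/
def IsUniversalFrom (S : DoubleFunctor D C) {a a' : C.Obj} {r r' : D.Obj}
    {j : C.Ver a a'} {k : D.Ver r r'} (μ : C.SqSet j (S.vmap k)) : Prop :=
  ∀ {d d' : D.Obj} (l : D.Ver d d'), Function.Bijective (S.inducedMap μ l)

end DoubleFunctor
namespace TwoCat

/-- Transport a 1-cell along equalities of objects. -/
def castHom (K : TwoCat) {a a' b b' : K.Obj} (h1 : a = a') (h2 : b = b')
    (f : K.Hom a b) : K.Hom a' b' := by
  cases h1; cases h2; exact f

/-- The double category `ℍ K` with horizontal 2-category `K` and only trivial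
vertical morphisms. -/
def HDouble (K : TwoCat) : DoubleCat where
  Obj := K.Obj
  Hor := K.Hom
  Ver a b := PLift (a = b)
  Sq {a b c d} f j k g := K.Cell f (K.castHom j.down.symm k.down.symm g)
  hId := K.hid
  hComp := K.hcomp
  vId a := ⟨rfl⟩
  vComp j k := ⟨j.down.trans k.down⟩
  hId_comp := K.hid_comp
  hComp_id := K.hcomp_id
  hAssoc := K.hassoc
  vId_comp j := rfl
  vComp_id j := rfl
  vAssoc j k l := rfl
  idSqV f := K.cid f
  idSqH j := by
    obtain ⟨hj⟩ := j; cases hj; exact K.cid (K.hid _)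
  hCompSq {a b c a' b' c'} {f g j k l f' g'} α β := by
    obtain ⟨hj⟩ := j; obtain ⟨hk⟩ := k; obtain ⟨hl⟩ := l
    cases hj; cases hk; cases hl
    exact K.vcomp (K.hcomp₂ α (K.cid g)) (K.hcomp₂ (K.cid f') β)
  vCompSq {a b c d e e'} {f j k g j' k' h} α β := by
    obtain ⟨hj⟩ := j; obtain ⟨hk⟩ := k; obtain ⟨hj'⟩ := j'; obtain ⟨hk'⟩ := k'
    cases hj; cases hk; cases hj'; cases hk'
    exact K.vcomp α β

end TwoCat

/-- A 2-functor (data).  The strict preservation laws are collected in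
`TwoFunctor.Laws`. -/
structure TwoFunctor (K L : TwoCat) where
  obj : K.Obj → L.Obj
  hmap : ∀ {a b}, K.Hom a b → L.Hom (obj a) (obj b)
  cmap : ∀ {a b} {f g : K.Hom a b}, K.Cell f g → L.Cell (hmap f) (hmap g)

namespace TwoFunctor

variable {K L M : TwoCat}

structure Laws (F : TwoFunctor K L) : Prop where
  hmap_id : ∀ a, F.hmap (K.hid a) = L.hid (F.obj a)
  hmap_comp : ∀ {a b c} (f : K.Hom a b) (g : K.Hom b c),
    F.hmap (K.hcomp f g) = L.hcomp (F.hmap f) (F.hmap g)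
  cmap_cid : ∀ {a b} (f : K.Hom a b), F.cmap (K.cid f) = L.cid (F.hmap f)
  cmap_vcomp : ∀ {a b} {f g h : K.Hom a b} (α : K.Cell f g) (β : K.Cell g h),
    F.cmap (K.vcomp α β) = L.vcomp (F.cmap α) (F.cmap β)
  cmap_hcomp₂ : ∀ {a b c} {f f' : K.Hom a b} {g g' : K.Hom b c}
    (α : K.Cell f f') (β : K.Cell g g'),
    HEq (F.cmap (K.hcomp₂ α β)) (L.hcomp₂ (F.cmap α) (F.cmap β))

/-- The identity 2-functor. -/
def idF (K : TwoCat) : TwoFunctor K K := ⟨fun a => a, fun f => f, fun α => α⟩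

/-- Composition of 2-functors (diagrammatic order). -/
def comp (F : TwoFunctor K L) (G : TwoFunctor L M) : TwoFunctor K M :=
  ⟨fun a => G.obj (F.obj a), fun f => G.hmap (F.hmap f), fun α => G.cmap (F.cmap α)⟩

end TwoFunctor

/-- The double functor `ℍ S : ℍ K → ℍ L` induced by a 2-functor `S`. -/
def TwoFunctor.HFun {K L : TwoCat} (S : TwoFunctor K L) :
    DoubleFunctor K.HDouble L.HDouble where
  obj := S.obj
  hmap := S.hmap
  vmap j := ⟨congrArg S.obj j.down⟩
  smap {a b c d} {f j k g} α := by
    obtain ⟨hj⟩ := j; obtain ⟨hk⟩ := k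
    cases hj; cases hk
    exact S.cmap α
namespace DoubleCat

/-- A folding on a double category: a holonomy 2-functor together with
bijections between squares and globular squares (2-cells of the horizontal
2-category), compatible with all compositions and identities. -/
structure Folding (D : DoubleCat) where
  hol : ∀ {a b}, D.Ver a b → D.Hor a b
  hol_id : ∀ a, hol (D.vId a) = D.hId a
  hol_comp : ∀ {a b c} (j : D.Ver a b) (k : D.Ver b c),
    hol (D.vComp j k) = D.hComp (hol j) (hol k)
  fold : ∀ {a b c d} {f : D.Hor a b} {j : D.Ver a c} {k : D.Ver b d}
    {g : D.Hor c d}, D.Sq f j k g →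
    D.Sq (D.hComp f (hol k)) (D.vId a) (D.vId d) (D.hComp (hol j) g)
  fold_bij : ∀ {a b c d} (f : D.Hor a b) (j : D.Ver a c) (k : D.Ver b d)
    (g : D.Hor c d), Function.Bijective (fun α : D.Sq f j k g => fold α)
  fold_id : ∀ {a b} {f g : D.Hor a b} (α : D.Sq f (D.vId a) (D.vId b) g),
    HEq (fold α) α
  fold_hComp : ∀ {a b c a' b' c'} {f₁ : D.Hor a b} {f₂ : D.Hor b c}
    {j : D.Ver a a'} {k : D.Ver b b'} {l : D.Ver c c'} {g₁ : D.Hor a' b'}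
    {g₂ : D.Hor b' c'} (α : D.Sq f₁ j k g₁) (β : D.Sq f₂ k l g₂),
    HEq (fold (D.hCompSq α β))
      (D.vCompSq (D.hCompSq (D.idSqV f₁) (fold β))
        (D.recast (D.hAssoc f₁ (hol k) g₂) rfl rfl rfl
          (D.hCompSq (fold α) (D.idSqV g₂))))
  fold_vComp : ∀ {a b c d e e'} {f : D.Hor a b} {j₁ : D.Ver a c}
    {k₁ : D.Ver b d} {g : D.Hor c d} {j₂ : D.Ver c e} {k₂ : D.Ver d e'}
    {h : D.Hor e e'} (α : D.Sq f j₁ k₁ g) (β : D.Sq g j₂ k₂ h),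
    HEq (fold (D.vCompSq α β))
      (D.vCompSq (D.hCompSq (fold α) (D.idSqV (hol k₂)))
        (D.recast (D.hAssoc (hol j₁) g (hol k₂)).symm rfl rfl rfl
          (D.hCompSq (D.idSqV (hol j₁)) (fold β))))
  fold_idSqH : ∀ {a b} (j : D.Ver a b), HEq (fold (D.idSqH j)) (D.idSqV (hol j))

end DoubleCat

/-- Compatibility of a double functor with foldings. -/
structure FoldCompat {C D : DoubleCat} (F : DoubleFunctor C D)
    (ΛC : C.Folding) (ΛD : D.Folding) : Prop where
  hol : ∀ {a b} (j : C.Ver a b), F.hmap (ΛC.hol j) = ΛD.hol (F.vmap j)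
  fold : ∀ {a b c d} {f : C.Hor a b} {j : C.Ver a c} {k : C.Ver b d}
    {g : C.Hor c d} (α : C.Sq f j k g),
    HEq (F.smap (ΛC.fold α)) (ΛD.fold (F.smap α))

/-- Compatibility of a horizontal natural transformation with foldings. -/
structure FoldCompatTrans {C D : DoubleCat} {F G : DoubleFunctor C D}
    (ΛC : C.Folding) (ΛD : D.Folding) (θ : HorNatTrans F G) : Prop where
  bound : ∀ {a b} (j : C.Ver a b),
    D.hComp (θ.app a) (G.hmap (ΛC.hol j))
      = D.hComp (F.hmap (ΛC.hol j)) (θ.app b)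
  fold : ∀ {a b} (j : C.Ver a b),
    HEq (ΛD.fold (θ.sq j))
      (D.idSqV (D.hComp (θ.app a) (G.hmap (ΛC.hol j))))

/-- A 2-natural transformation between 2-functors (data). -/
structure TwoNatTrans {K L : TwoCat} (F G : TwoFunctor K L) where
  app : ∀ a, L.Hom (F.obj a) (G.obj a)

namespace TwoNatTrans

variable {K L : TwoCat} {F G : TwoFunctor K L}

structure Laws (θ : TwoNatTrans F G) : Prop where
  natural_hom : ∀ {a b} (f : K.Hom a b),
    L.hcomp (F.hmap f) (θ.app b) = L.hcomp (θ.app a) (G.hmap f)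
  natural_cell : ∀ {a b} {f g : K.Hom a b} (α : K.Cell f g),
    HEq (L.hcomp₂ (F.cmap α) (L.cid (θ.app b)))
        (L.hcomp₂ (L.cid (θ.app a)) (G.cmap α))

end TwoNatTrans

/-- A (strict) 2-adjunction `F ⊣ G`. -/
structure TwoAdjunction {X A : TwoCat} (F : TwoFunctor X A) (G : TwoFunctor A X) where
  F_laws : F.Laws
  G_laws : G.Laws
  unit : TwoNatTrans (TwoFunctor.idF X) (F.comp G)
  counit : TwoNatTrans (G.comp F) (TwoFunctor.idF A)
  unit_laws : unit.Laws
  counit_laws : counit.Laws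
  triangleF : ∀ a, A.hcomp (F.hmap (unit.app a)) (counit.app (F.obj a)) = A.hid (F.obj a)
  triangleG : ∀ a, X.hcomp (unit.app (G.obj a)) (G.hmap (counit.app a)) = X.hid (G.obj a)

/-- The horizontal 2-functor of a double functor. -/
def DoubleFunctor.toH {C D : DoubleCat} (F : DoubleFunctor C D) (hF : F.Laws) :
    TwoFunctor C.H D.H where
  obj := F.obj
  hmap := F.hmap
  cmap α := D.recast rfl (hF.vmap_id _) (hF.vmap_id _) rfl (F.smap α)

/-- The vertical 2-functor of a double functor. -/
def DoubleFunctor.toV {C D : DoubleCat} (F : DoubleFunctor C D) (hF : F.Laws) :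
    TwoFunctor C.V D.V where
  obj := F.obj
  hmap := F.vmap
  cmap α := D.recast (hF.hmap_id _) rfl rfl (hF.hmap_id _) (F.smap α)

/-!
A folding identifies each square with a globular square, so a square is determined
by its fold.  Call a square thin when its fold is an identity 2-cell: thin squares are
determined by their boundary, include the identity squares, and are closed under both
compositions and under double functors compatible with the foldings.

A horizontal double adjunction restricted to globular squares is a 2-adjunction
`𝐇F ⊣ 𝐇G`.  Conversely, given a 2-adjunction, naturality of the unit (or counit) at
the holonomy of a vertical morphism `j` is an equation of 1-cells, and the square
component at `j` is the thin square unfolding its identity 2-cell.  The square laws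
and the triangle identities for squares hold because both sides are thin with the
same boundary; naturality with respect to a square `α` follows, after folding, from
2-naturality with respect to the globular square `Λ.fold α`.
-/

namespace DoubleCat

variable {D : DoubleCat}

theorem recast_heq {a b c d : D.Obj} {f f' : D.Hor a b} {j j' : D.Ver a c}
    {k k' : D.Ver b d} {g g' : D.Hor c d} (hf : f = f') (hj : j = j') (hk : k = k')
    (hg : g = g') (α : D.Sq f j k g) : HEq (D.recast hf hj hk hg α) α := by
  cases hf; cases hj; cases hk; cases hg; rfl

theorem idSqV_congr {a b : D.Obj} {f g : D.Hor a b} (h : f = g) :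
    HEq (D.idSqV f) (D.idSqV g) := by
  cases h; rfl

theorem hCompSq_congr {a b c a' b' c' : D.Obj}
    {f₁ f₂ : D.Hor a b} {g₁ g₂ : D.Hor b c} {j₁ j₂ : D.Ver a a'}
    {k₁ k₂ : D.Ver b b'} {l₁ l₂ : D.Ver c c'} {f₁' f₂' : D.Hor a' b'}
    {g₁' g₂' : D.Hor b' c'}
    (hf : f₁ = f₂) (hg : g₁ = g₂) (hj : j₁ = j₂) (hk : k₁ = k₂) (hl : l₁ = l₂)
    (hf' : f₁' = f₂') (hg' : g₁' = g₂')
    {α₁ : D.Sq f₁ j₁ k₁ f₁'} {α₂ : D.Sq f₂ j₂ k₂ f₂'}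
    {β₁ : D.Sq g₁ k₁ l₁ g₁'} {β₂ : D.Sq g₂ k₂ l₂ g₂'}
    (hα : HEq α₁ α₂) (hβ : HEq β₁ β₂) :
    HEq (D.hCompSq α₁ β₁) (D.hCompSq α₂ β₂) := by
  subst hf hg hj hk hl hf' hg'
  cases hα; cases hβ; rfl

theorem vCompSq_congr {a b c d e e' : D.Obj}
    {f₁ f₂ : D.Hor a b} {j₁ j₂ : D.Ver a c} {k₁ k₂ : D.Ver b d}
    {g₁ g₂ : D.Hor c d} {j₁' j₂' : D.Ver c e} {k₁' k₂' : D.Ver d e'}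
    {h₁ h₂ : D.Hor e e'}
    (hf : f₁ = f₂) (hj : j₁ = j₂) (hk : k₁ = k₂) (hg : g₁ = g₂)
    (hj' : j₁' = j₂') (hk' : k₁' = k₂') (hh : h₁ = h₂)
    {α₁ : D.Sq f₁ j₁ k₁ g₁} {α₂ : D.Sq f₂ j₂ k₂ g₂}
    {β₁ : D.Sq g₁ j₁' k₁' h₁} {β₂ : D.Sq g₂ j₂' k₂' h₂}
    (hα : HEq α₁ α₂) (hβ : HEq β₁ β₂) :
    HEq (D.vCompSq α₁ β₁) (D.vCompSq α₂ β₂) := by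
  subst hf hj hk hg hj' hk' hh
  cases hα; cases hβ; rfl

def eqSq (D : DoubleCat) {a b : D.Obj} {f g : D.Hor a b} (h : f = g) :
    D.Sq f (D.vId a) (D.vId b) g :=
  D.recast rfl rfl rfl h (D.idSqV f)

theorem eqSq_heq_idSqV {a b : D.Obj} {f g : D.Hor a b} (h : f = g) :
    HEq (D.eqSq h) (D.idSqV f) := by
  cases h; rfl

theorem hCompSq_heq_idSqV (hD : D.Laws) {a b c : D.Obj} {f f' : D.Hor a b}
    {g g' : D.Hor b c} {α : D.Sq f (D.vId a) (D.vId b) f'}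
    {β : D.Sq g (D.vId b) (D.vId c) g'} (hf : f = f') (hg : g = g')
    (hα : HEq α (D.idSqV f)) (hβ : HEq β (D.idSqV g)) :
    HEq (D.hCompSq α β) (D.idSqV (D.hComp f g)) := by
  subst hf hg
  cases eq_of_heq hα; cases eq_of_heq hβ
  exact heq_of_eq (hD.idSqV_hComp f g)

theorem vCompSq_heq_of_left_heq_idSqV (hD : D.Laws) {a b c e : D.Obj}
    {f f' : D.Hor a b} {j : D.Ver a c} {k : D.Ver b e} {g : D.Hor c e}
    {α : D.Sq f (D.vId a) (D.vId b) f'} (β : D.Sq f' j k g) (hf : f = f')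
    (hα : HEq α (D.idSqV f)) : HEq (D.vCompSq α β) β := by
  subst hf
  cases eq_of_heq hα
  exact hD.idSqV_vComp β

theorem vCompSq_heq_of_right_heq_idSqV (hD : D.Laws) {a b c e : D.Obj}
    {f : D.Hor a b} {j : D.Ver a c} {k : D.Ver b e} {g g' : D.Hor c e}
    (α : D.Sq f j k g) {β : D.Sq g (D.vId c) (D.vId e) g'} (hg : g = g')
    (hβ : HEq β (D.idSqV g)) : HEq (D.vCompSq α β) α := by
  subst hg
  cases eq_of_heq hβ
  exact hD.vComp_idSqV α

namespace Folding

variable (Λ : D.Folding)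

theorem heq_of_fold_heq {a b c d : D.Obj}
    {f₁ f₂ : D.Hor a b} {j₁ j₂ : D.Ver a c} {k₁ k₂ : D.Ver b d} {g₁ g₂ : D.Hor c d}
    (hf : f₁ = f₂) (hj : j₁ = j₂) (hk : k₁ = k₂) (hg : g₁ = g₂)
    {α : D.Sq f₁ j₁ k₁ g₁} {β : D.Sq f₂ j₂ k₂ g₂}
    (h : HEq (Λ.fold α) (Λ.fold β)) : HEq α β := by
  subst hf hj hk hg
  exact heq_of_eq ((Λ.fold_bij f₁ j₁ k₁ g₁).injective (eq_of_heq h))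

noncomputable def unfold {a b c d : D.Obj} (f : D.Hor a b) (j : D.Ver a c)
    (k : D.Ver b d) (g : D.Hor c d)
    (γ : D.Sq (D.hComp f (Λ.hol k)) (D.vId a) (D.vId d) (D.hComp (Λ.hol j) g)) :
    D.Sq f j k g :=
  (Equiv.ofBijective _ (Λ.fold_bij f j k g)).symm γ

theorem fold_unfold {a b c d : D.Obj} (f : D.Hor a b) (j : D.Ver a c)
    (k : D.Ver b d) (g : D.Hor c d)
    (γ : D.Sq (D.hComp f (Λ.hol k)) (D.vId a) (D.vId d) (D.hComp (Λ.hol j) g)) :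
    Λ.fold (Λ.unfold f j k g γ) = γ :=
  (Equiv.ofBijective _ (Λ.fold_bij f j k g)).apply_symm_apply γ

def IsThin {a b c d : D.Obj} {f : D.Hor a b} {j : D.Ver a c} {k : D.Ver b d}
    {g : D.Hor c d} (α : D.Sq f j k g) : Prop :=
  D.hComp f (Λ.hol k) = D.hComp (Λ.hol j) g ∧
    HEq (Λ.fold α) (D.idSqV (D.hComp f (Λ.hol k)))

variable {Λ}

theorem IsThin.heq {a b c d : D.Obj}
    {f₁ f₂ : D.Hor a b} {j₁ j₂ : D.Ver a c} {k₁ k₂ : D.Ver b d} {g₁ g₂ : D.Hor c d}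
    {α : D.Sq f₁ j₁ k₁ g₁} {β : D.Sq f₂ j₂ k₂ g₂} (hα : Λ.IsThin α) (hβ : Λ.IsThin β)
    (hf : f₁ = f₂) (hj : j₁ = j₂) (hk : k₁ = k₂) (hg : g₁ = g₂) : HEq α β := by
  subst hf hj hk hg
  exact Λ.heq_of_fold_heq rfl rfl rfl rfl (hα.2.trans hβ.2.symm)

variable (Λ)

theorem isThin_idSqV {a b : D.Obj} (f : D.Hor a b) : Λ.IsThin (D.idSqV f) := by
  have h : D.hComp f (Λ.hol (D.vId b)) = f := by rw [Λ.hol_id, D.hComp_id]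
  exact ⟨by rw [h, Λ.hol_id, D.hId_comp], (Λ.fold_id _).trans (D.idSqV_congr h.symm)⟩

theorem isThin_idSqH {a b : D.Obj} (j : D.Ver a b) : Λ.IsThin (D.idSqH j) :=
  ⟨by rw [D.hId_comp, D.hComp_id],
    (Λ.fold_idSqH j).trans (D.idSqV_congr (D.hId_comp _).symm)⟩

theorem isThin_unfold_eqSq {a b c d : D.Obj} {f : D.Hor a b} {j : D.Ver a c}
    {k : D.Ver b d} {g : D.Hor c d} (h : D.hComp f (Λ.hol k) = D.hComp (Λ.hol j) g) :
    Λ.IsThin (Λ.unfold f j k g (D.eqSq h)) :=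
  ⟨h, by rw [fold_unfold]; exact D.eqSq_heq_idSqV h⟩

section Laws

variable {Λ} (hD : D.Laws)
include hD

theorem fold_hCompSq_heq_of_isThin_right {a b c a' b' c' : D.Obj} {f₁ : D.Hor a b}
    {f₂ : D.Hor b c} {j : D.Ver a a'} {k : D.Ver b b'} {l : D.Ver c c'}
    {g₁ : D.Hor a' b'} {g₂ : D.Hor b' c'} (α : D.Sq f₁ j k g₁) {β : D.Sq f₂ k l g₂}
    (hβ : Λ.IsThin β) :
    HEq (Λ.fold (D.hCompSq α β)) (D.hCompSq (Λ.fold α) (D.idSqV g₂)) :=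
  (Λ.fold_hComp α β).trans
    ((D.vCompSq_heq_of_left_heq_idSqV hD _ (by rw [hβ.1])
      (D.hCompSq_heq_idSqV hD rfl hβ.1 HEq.rfl hβ.2)).trans (D.recast_heq _ _ _ _ _))

theorem fold_hCompSq_heq_of_isThin_left {a b c a' b' c' : D.Obj} {f₁ : D.Hor a b}
    {f₂ : D.Hor b c} {j : D.Ver a a'} {k : D.Ver b b'} {l : D.Ver c c'}
    {g₁ : D.Hor a' b'} {g₂ : D.Hor b' c'} {α : D.Sq f₁ j k g₁} (hα : Λ.IsThin α)
    (β : D.Sq f₂ k l g₂) :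
    HEq (Λ.fold (D.hCompSq α β)) (D.hCompSq (D.idSqV f₁) (Λ.fold β)) :=
  (Λ.fold_hComp α β).trans
    (D.vCompSq_heq_of_right_heq_idSqV hD _ (by rw [← D.hAssoc, hα.1])
      ((D.recast_heq _ _ _ _ _).trans
        ((D.hCompSq_heq_idSqV hD hα.1 rfl hα.2 HEq.rfl).trans
          (D.idSqV_congr (D.hAssoc _ _ _)))))

theorem IsThin.hCompSq {a b c a' b' c' : D.Obj} {f₁ : D.Hor a b}
    {f₂ : D.Hor b c} {j : D.Ver a a'} {k : D.Ver b b'} {l : D.Ver c c'}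
    {g₁ : D.Hor a' b'} {g₂ : D.Hor b' c'} {α : D.Sq f₁ j k g₁} {β : D.Sq f₂ k l g₂}
    (hα : Λ.IsThin α) (hβ : Λ.IsThin β) : Λ.IsThin (D.hCompSq α β) := by
  refine ⟨by rw [D.hAssoc, hβ.1, ← D.hAssoc, hα.1, D.hAssoc], ?_⟩
  refine (fold_hCompSq_heq_of_isThin_right hD α hβ).trans
    ((D.hCompSq_heq_idSqV hD hα.1 rfl hα.2 HEq.rfl).trans (D.idSqV_congr ?_))
  rw [D.hAssoc, D.hAssoc, hβ.1]

theorem IsThin.vCompSq {a b c d e e' : D.Obj} {f : D.Hor a b} {j₁ : D.Ver a c}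
    {k₁ : D.Ver b d} {g : D.Hor c d} {j₂ : D.Ver c e} {k₂ : D.Ver d e'} {h : D.Hor e e'}
    {α : D.Sq f j₁ k₁ g} {β : D.Sq g j₂ k₂ h} (hα : Λ.IsThin α) (hβ : Λ.IsThin β) :
    Λ.IsThin (D.vCompSq α β) := by
  refine ⟨by rw [Λ.hol_comp, Λ.hol_comp, ← D.hAssoc, hα.1, D.hAssoc, hβ.1, D.hAssoc], ?_⟩
  refine (Λ.fold_vComp α β).trans
    ((D.vCompSq_heq_of_left_heq_idSqV hD _ (by rw [hα.1])
      (D.hCompSq_heq_idSqV hD hα.1 rfl hα.2 HEq.rfl)).trans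
    ((D.recast_heq _ _ _ _ _).trans
      ((D.hCompSq_heq_idSqV hD rfl hβ.1 HEq.rfl hβ.2).trans (D.idSqV_congr ?_))))
  rw [Λ.hol_comp, ← D.hAssoc, ← D.hAssoc, hα.1]

end Laws

end Folding

end DoubleCat

namespace DoubleFunctor

variable {C D E : DoubleCat}

theorem smap_congr (F : DoubleFunctor C D) {a b c d : C.Obj}
    {f₁ f₂ : C.Hor a b} {j₁ j₂ : C.Ver a c} {k₁ k₂ : C.Ver b d} {g₁ g₂ : C.Hor c d}
    (hf : f₁ = f₂) (hj : j₁ = j₂) (hk : k₁ = k₂) (hg : g₁ = g₂)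
    {α : C.Sq f₁ j₁ k₁ g₁} {β : C.Sq f₂ j₂ k₂ g₂} (h : HEq α β) :
    HEq (F.smap α) (F.smap β) := by
  subst hf hj hk hg
  cases h; rfl

theorem Laws.id : (idF C).Laws where
  hmap_id _ := rfl
  hmap_comp _ _ := rfl
  vmap_id _ := rfl
  vmap_comp _ _ := rfl
  smap_idSqV _ := HEq.rfl
  smap_idSqH _ := HEq.rfl
  smap_hComp _ _ := HEq.rfl
  smap_vComp _ _ := HEq.rfl

theorem Laws.comp {F : DoubleFunctor C D} {G : DoubleFunctor D E} (hF : F.Laws)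
    (hG : G.Laws) : (F.comp G).Laws where
  hmap_id a := by simp only [DoubleFunctor.comp, hF.hmap_id, hG.hmap_id]
  hmap_comp f g := by simp only [DoubleFunctor.comp, hF.hmap_comp, hG.hmap_comp]
  vmap_id a := by simp only [DoubleFunctor.comp, hF.vmap_id, hG.vmap_id]
  vmap_comp j k := by simp only [DoubleFunctor.comp, hF.vmap_comp, hG.vmap_comp]
  smap_idSqV f := (G.smap_congr rfl (hF.vmap_id _) (hF.vmap_id _) rfl
    (hF.smap_idSqV f)).trans (hG.smap_idSqV _)
  smap_idSqH j := (G.smap_congr (hF.hmap_id _) rfl rfl (hF.hmap_id _)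
    (hF.smap_idSqH j)).trans (hG.smap_idSqH _)
  smap_hComp α β := (G.smap_congr (hF.hmap_comp _ _) rfl rfl (hF.hmap_comp _ _)
    (hF.smap_hComp α β)).trans (hG.smap_hComp _ _)
  smap_vComp α β := (G.smap_congr rfl (hF.vmap_comp _ _) (hF.vmap_comp _ _) rfl
    (hF.smap_vComp α β)).trans (hG.smap_vComp _ _)

theorem toH_laws {F : DoubleFunctor C D} (hF : F.Laws) : (F.toH hF).Laws where
  hmap_id := hF.hmap_id
  hmap_comp := hF.hmap_comp
  cmap_cid f := by
    dsimp only [toH, DoubleCat.H]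
    exact eq_of_heq ((D.recast_heq _ _ _ _ _).trans (hF.smap_idSqV f))
  cmap_vcomp α β := by
    dsimp only [toH, DoubleCat.H]
    refine eq_of_heq (((D.recast_heq _ _ _ _ _).trans ?_).trans (D.recast_heq _ _ _ _ _).symm)
    exact (F.smap_congr rfl (C.vId_comp _).symm (C.vId_comp _).symm rfl
      (C.recast_heq _ _ _ _ _)).trans ((hF.smap_vComp α β).trans
      (D.vCompSq_congr rfl (hF.vmap_id _) (hF.vmap_id _) rfl (hF.vmap_id _) (hF.vmap_id _) rfl
        (D.recast_heq _ _ _ _ _).symm (D.recast_heq _ _ _ _ _).symm))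
  cmap_hcomp₂ α β := by
    dsimp only [toH, DoubleCat.H]
    exact (D.recast_heq _ _ _ _ _).trans ((hF.smap_hComp α β).trans
      (D.hCompSq_congr rfl rfl (hF.vmap_id _) (hF.vmap_id _) (hF.vmap_id _) rfl rfl
        (D.recast_heq _ _ _ _ _).symm (D.recast_heq _ _ _ _ _).symm))

theorem toH_comp {F : DoubleFunctor C D} {G : DoubleFunctor D E} (hF : F.Laws)
    (hG : G.Laws) (hFG : (F.comp G).Laws) :
    (F.comp G).toH hFG = (F.toH hF).comp (G.toH hG) := by
  show TwoFunctor.mk _ _ _ = TwoFunctor.mk _ _ _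
  congr 1
  funext a b f g α
  dsimp only [toH, DoubleFunctor.comp]
  exact eq_of_heq ((E.recast_heq _ _ _ _ _).trans ((G.smap_congr rfl (hF.vmap_id a)
    (hF.vmap_id b) rfl (D.recast_heq _ _ _ _ (F.smap α)).symm).trans
    (E.recast_heq _ _ _ _ _).symm))

end DoubleFunctor

namespace FoldCompat

variable {C D E : DoubleCat} {ΛC : C.Folding} {ΛD : D.Folding} {ΛE : E.Folding}
  {F : DoubleFunctor C D}

theorem id : FoldCompat (DoubleFunctor.idF C) ΛC ΛC :=
  ⟨fun _ => rfl, fun _ => HEq.rfl⟩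

theorem hmap_hComp_hol (cF : FoldCompat F ΛC ΛD) (hF : F.Laws) {a b c : C.Obj}
    (f : C.Hor a b) (k : C.Ver b c) :
    F.hmap (C.hComp f (ΛC.hol k)) = D.hComp (F.hmap f) (ΛD.hol (F.vmap k)) := by
  rw [hF.hmap_comp, cF.hol]

theorem hmap_hol_hComp (cF : FoldCompat F ΛC ΛD) (hF : F.Laws) {a b c : C.Obj}
    (j : C.Ver a b) (g : C.Hor b c) :
    F.hmap (C.hComp (ΛC.hol j) g) = D.hComp (ΛD.hol (F.vmap j)) (F.hmap g) := by
  rw [hF.hmap_comp, cF.hol]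

theorem comp {G : DoubleFunctor D E} (cF : FoldCompat F ΛC ΛD) (cG : FoldCompat G ΛD ΛE)
    (hF : F.Laws) : FoldCompat (F.comp G) ΛC ΛE where
  hol j := by simp only [DoubleFunctor.comp, cF.hol, cG.hol]
  fold α := (G.smap_congr (cF.hmap_hComp_hol hF _ _) (hF.vmap_id _) (hF.vmap_id _)
    (cF.hmap_hol_hComp hF _ _) (cF.fold α)).trans (cG.fold (F.smap α))

theorem fold_smap_heq_toH_cmap (cF : FoldCompat F ΛC ΛD) (hF : F.Laws) {a b c d : C.Obj}
    {f : C.Hor a b} {j : C.Ver a c} {k : C.Ver b d} {g : C.Hor c d} (α : C.Sq f j k g) :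
    HEq (ΛD.fold (F.smap α)) ((F.toH hF).cmap (ΛC.fold α)) := by
  dsimp only [DoubleFunctor.toH, DoubleCat.H]
  exact (cF.fold α).symm.trans (D.recast_heq _ _ _ _ _).symm

theorem isThin_smap (cF : FoldCompat F ΛC ΛD) (hF : F.Laws) {a b c d : C.Obj}
    {f : C.Hor a b} {j : C.Ver a c} {k : C.Ver b d} {g : C.Hor c d} {α : C.Sq f j k g}
    (hα : ΛC.IsThin α) : ΛD.IsThin (F.smap α) :=
  ⟨by rw [← cF.hmap_hComp_hol hF, ← cF.hmap_hol_hComp hF, hα.1],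
    (cF.fold α).symm.trans ((F.smap_congr rfl rfl rfl hα.1.symm hα.2).trans
      ((hF.smap_idSqV _).trans (D.idSqV_congr (cF.hmap_hComp_hol hF f k))))⟩

end FoldCompat

theorem TwoNatTrans.Laws.congr {K L : TwoCat} {S S' T T' : TwoFunctor K L}
    (hS : S = S') (hT : T = T') {θ : TwoNatTrans S T} {θ' : TwoNatTrans S' T'}
    (happ : HEq θ.app θ'.app) (hθ : θ.Laws) : θ'.Laws := by
  subst hS hT
  obtain ⟨app⟩ := θ
  obtain ⟨app'⟩ := θ'
  cases happ
  exact hθ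

namespace HorNatTrans

variable {C D : DoubleCat} {P Q : DoubleFunctor C D}

def toH (θ : HorNatTrans P Q) (hP : P.Laws) (hQ : Q.Laws) :
    TwoNatTrans (P.toH hP) (Q.toH hQ) :=
  ⟨θ.app⟩

theorem Laws.toH {θ : HorNatTrans P Q} (hθ : θ.Laws) (hP : P.Laws) (hQ : Q.Laws) :
    (θ.toH hP hQ).Laws where
  natural_hom := hθ.natural_hor
  natural_cell {a b f g} α := by
    dsimp only [HorNatTrans.toH, DoubleFunctor.toH, DoubleCat.H]
    exact (D.hCompSq_congr rfl rfl (hP.vmap_id a) (hP.vmap_id b) (hQ.vmap_id b) rfl rfl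
      (D.recast_heq _ _ _ _ _).symm (hθ.sq_id b)).symm.trans
      ((hθ.natural α).trans (D.hCompSq_congr rfl rfl (hP.vmap_id a) (hQ.vmap_id a)
        (hQ.vmap_id b) rfl rfl (hθ.sq_id a) (D.recast_heq _ _ _ _ _).symm))

end HorNatTrans

namespace TwoNatTrans.Laws

variable {C D : DoubleCat} {ΛC : C.Folding} {ΛD : D.Folding} {P Q : DoubleFunctor C D}
  {hP : P.Laws} {hQ : Q.Laws} {θ : TwoNatTrans (P.toH hP) (Q.toH hQ)}

theorem hComp_app_hol (hθ : θ.Laws) (cP : FoldCompat P ΛC ΛD) (cQ : FoldCompat Q ΛC ΛD)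
    {a b : C.Obj} (j : C.Ver a b) :
    D.hComp (θ.app a) (ΛD.hol (Q.vmap j)) = D.hComp (ΛD.hol (P.vmap j)) (θ.app b) := by
  have h : D.hComp (P.hmap (ΛC.hol j)) (θ.app b) = D.hComp (θ.app a) (Q.hmap (ΛC.hol j)) :=
    hθ.natural_hom (ΛC.hol j)
  rw [cP.hol, cQ.hol] at h
  exact h.symm

noncomputable def toHorNatTrans (hθ : θ.Laws) (cP : FoldCompat P ΛC ΛD)
    (cQ : FoldCompat Q ΛC ΛD) : HorNatTrans P Q where
  app := θ.app
  sq j := ΛD.unfold _ _ _ _ (D.eqSq (hθ.hComp_app_hol cP cQ j))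

variable (hθ : θ.Laws) (cP : FoldCompat P ΛC ΛD) (cQ : FoldCompat Q ΛC ΛD)

theorem isThin_toHorNatTrans_sq {a b : C.Obj} (j : C.Ver a b) :
    ΛD.IsThin ((hθ.toHorNatTrans cP cQ).sq j) :=
  ΛD.isThin_unfold_eqSq _

theorem toHorNatTrans_natural (hD : D.Laws) {a b c d : C.Obj} {f : C.Hor a b}
    {j : C.Ver a c} {k : C.Ver b d} {g : C.Hor c d} (α : C.Sq f j k g) :
    HEq (D.hCompSq (P.smap α) ((hθ.toHorNatTrans cP cQ).sq k))
      (D.hCompSq ((hθ.toHorNatTrans cP cQ).sq j) (Q.smap α)) := by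
  refine ΛD.heq_of_fold_heq (hθ.natural_hom f) rfl rfl (hθ.natural_hom g) ?_
  have fold_left := ΛD.fold_hCompSq_heq_of_isThin_right hD (P.smap α)
    (hθ.isThin_toHorNatTrans_sq cP cQ k)
  have fold_right := ΛD.fold_hCompSq_heq_of_isThin_left hD
    (hθ.isThin_toHorNatTrans_sq cP cQ j) (Q.smap α)
  have cells_left := D.hCompSq_congr (cP.hmap_hComp_hol hP f k).symm rfl rfl rfl rfl
    (cP.hmap_hol_hComp hP j g).symm rfl (cP.fold_smap_heq_toH_cmap hP α)
    (HEq.refl (D.idSqV (θ.app d)))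
  have cells_right := D.hCompSq_congr rfl (cQ.hmap_hComp_hol hQ f k) rfl rfl rfl rfl
    (cQ.hmap_hol_hComp hQ j g) (HEq.refl (D.idSqV (θ.app a)))
    (cQ.fold_smap_heq_toH_cmap hQ α).symm
  exact fold_left.trans (cells_left.trans
    ((hθ.natural_cell (ΛC.fold α)).trans (cells_right.trans fold_right.symm)))

theorem toHorNatTrans_laws (hD : D.Laws) : (hθ.toHorNatTrans cP cQ).Laws where
  sq_id a := (hθ.isThin_toHorNatTrans_sq cP cQ _).heq (ΛD.isThin_idSqV _) rfl
    (hP.vmap_id a) (hQ.vmap_id a) rfl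
  sq_comp j j' := (hθ.isThin_toHorNatTrans_sq cP cQ _).heq
    ((hθ.isThin_toHorNatTrans_sq cP cQ j).vCompSq hD (hθ.isThin_toHorNatTrans_sq cP cQ j'))
    rfl (hP.vmap_comp j j') (hQ.vmap_comp j j') rfl
  natural_hor := hθ.natural_hom
  natural := hθ.toHorNatTrans_natural cP cQ hD

end TwoNatTrans.Laws

section Adjunctions

variable {X A : DoubleCat} {F : DoubleFunctor X A} {G : DoubleFunctor A X}

def HorDoubleAdj.toTwoAdjunction (adj : HorDoubleAdj F G) (hF : F.Laws) (hG : G.Laws) :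
    TwoAdjunction (F.toH hF) (G.toH hG) where
  F_laws := DoubleFunctor.toH_laws hF
  G_laws := DoubleFunctor.toH_laws hG
  unit := ⟨adj.unit.app⟩
  counit := ⟨adj.counit.app⟩
  unit_laws := (adj.unit_laws.toH .id (hF.comp hG)).congr rfl
    (DoubleFunctor.toH_comp hF hG _) HEq.rfl
  counit_laws := (adj.counit_laws.toH (hG.comp hF) .id).congr
    (DoubleFunctor.toH_comp hG hF _) rfl HEq.rfl
  triangleF := adj.triangleF_obj
  triangleG := adj.triangleG_obj

noncomputable def TwoAdjunction.toHorDoubleAdj {ΛX : X.Folding} {ΛA : A.Folding}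
    {hF : F.Laws} {hG : G.Laws} (adj : TwoAdjunction (F.toH hF) (G.toH hG))
    (hX : X.Laws) (hA : A.Laws) (cF : FoldCompat F ΛX ΛA) (cG : FoldCompat G ΛA ΛX) :
    HorDoubleAdj F G :=
  have hunit : (⟨adj.unit.app⟩ : TwoNatTrans ((DoubleFunctor.idF X).toH .id)
      ((F.comp G).toH (hF.comp hG))).Laws :=
    adj.unit_laws.congr rfl (DoubleFunctor.toH_comp hF hG _).symm HEq.rfl
  have hcounit : (⟨adj.counit.app⟩ : TwoNatTrans ((G.comp F).toH (hG.comp hF))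
      ((DoubleFunctor.idF A).toH .id)).Laws :=
    adj.counit_laws.congr (DoubleFunctor.toH_comp hG hF _).symm rfl HEq.rfl
  { F_laws := hF
    G_laws := hG
    unit := hunit.toHorNatTrans FoldCompat.id (cF.comp cG hF)
    counit := hcounit.toHorNatTrans (cG.comp cF hG) FoldCompat.id
    unit_laws := hunit.toHorNatTrans_laws _ _ hX
    counit_laws := hcounit.toHorNatTrans_laws _ _ hA
    triangleF_obj := adj.triangleF
    triangleF_sq := fun {a b} j =>
      ((cF.isThin_smap hF (hunit.isThin_toHorNatTrans_sq _ _ j)).hCompSq hA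
        (hcounit.isThin_toHorNatTrans_sq _ _ (F.vmap j))).heq (ΛA.isThin_idSqH _)
        (adj.triangleF a) rfl rfl (adj.triangleF b)
    triangleG_obj := adj.triangleG
    triangleG_sq := fun {r r'} k =>
      ((hunit.isThin_toHorNatTrans_sq _ _ (G.vmap k)).hCompSq hX
        (cG.isThin_smap hG (hcounit.isThin_toHorNatTrans_sq _ _ k))).heq
        (ΛX.isThin_idSqH _) (adj.triangleG r) rfl rfl (adj.triangleG r') }

end Adjunctions

/-- Let `A` and `X` be double categories with foldings, and
`F : X → A`, `G : A → X` double functors compatible with the foldings.  Then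
`F` and `G` are horizontal double adjoints if and only if their horizontal
2-functors `𝐇F` and `𝐇G` are 2-adjoints. -/
theorem fold_compatible_double_adjunction_iff_horizontal_two_adjunction
    {X A : DoubleCat} (hX : X.Laws) (hA : A.Laws)
    (ΛX : X.Folding) (ΛA : A.Folding)
    (F : DoubleFunctor X A) (G : DoubleFunctor A X)
    (hF : F.Laws) (hG : G.Laws)
    (cF : FoldCompat F ΛX ΛA) (cG : FoldCompat G ΛA ΛX) :
    Nonempty (HorDoubleAdj F G) ↔ Nonempty (TwoAdjunction (F.toH hF) (G.toH hG)) :=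
  ⟨fun ⟨adj⟩ => ⟨adj.toTwoAdjunction hF hG⟩, fun ⟨adj⟩ => ⟨adj.toHorDoubleAdj hX hA cF cG⟩⟩
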